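/- arXiv:1902.09438 — 3 statements merged into one kernel-verified Lean document; each statement's English description precedes it below -/
import Mathlib

section
/- Let m(r) = r·√(tanh(r)/r). There exist constants c, C > 0 such that for all r > 0, c·(1+r²)^(-1/4) ≤ m'(r) ≤ C·(1+r²)^(-1/4), i.e., m'(r) is comparable to ⟨r⟩^(-1/2) where ⟨r⟩ = √(1+r²). -/
noncomputable def K (r : ℝ) : ℝ := Real.sqrt (Real.tanh r / r)

noncomputable def m (r : ℝ) : ℝ := r * K r

lemma exp_le_small {r : ℝ} (h0 : 0 ≤ r) (h : r ≤ 1/2) : Real.exp r ≤ 1 + 2*r := by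
  have h1 : -r + 1 ≤ Real.exp (-r) := Real.add_one_le_exp (-r)
  have h3 : Real.exp r * Real.exp (-r) = 1 := by rw [← Real.exp_add]; simp
  nlinarith [Real.exp_pos r]

lemma tanh_pos' {r : ℝ} (hr : 0 < r) : 0 < Real.tanh r := by
  rw [Real.tanh_eq_sinh_div_cosh]
  exact div_pos (Real.sinh_pos_iff.2 hr) (Real.cosh_pos r)

lemma ineq_small_low {r sh ch q : ℝ} (hr : 0 < r) (hsh1 : r ≤ sh) (hsh3 : sh ≤ 3*r)
    (hch1 : 1 ≤ ch) (hch2 : ch ≤ 3/2) (hq1 : 1 ≤ q) :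
    1/4*(r*sh*ch^3) ≤ (sh*ch+r)^2*q := by
  have hc2 : ch^2 ≤ 9/4 := by nlinarith [mul_le_mul hch2 hch2 (by linarith) (by norm_num : (0:ℝ) ≤ 3/2)]
  have hc3 : ch^3 ≤ 27/8 := by nlinarith [mul_le_mul hc2 hch2 (by linarith) (by norm_num : (0:ℝ) ≤ 9/4)]
  have h1 : sh*ch^3 ≤ 3*r*(27/8) := by
    have := mul_le_mul hsh3 hc3 (by positivity) (by linarith)
    linarith
  have h2 : r*(sh*ch^3) ≤ r*(3*r*(27/8)) := mul_le_mul_of_nonneg_left h1 hr.le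
  have hs1 : r ≤ sh*ch := by nlinarith
  have h3 : 4*r^2 ≤ (sh*ch+r)^2 := by nlinarith
  have h4 : (sh*ch+r)^2*1 ≤ (sh*ch+r)^2*q :=
    mul_le_mul_of_nonneg_left hq1 (sq_nonneg _)
  nlinarith [h2, h3, h4]

lemma ineq_small_up {r sh ch q : ℝ} (hr : 0 < r) (hsh1 : r ≤ sh) (hsh3 : sh ≤ 3*r)
    (hch1 : 1 ≤ ch) (hch2 : ch ≤ 3/2) (hq0 : 0 < q) (hq2 : q ≤ 2) :
    (sh*ch+r)^2*q ≤ 64*(r*sh*ch^3) := by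
  have h1 : sh*ch ≤ 9/2*r := by nlinarith [mul_le_mul hsh3 hch2 (by linarith) (by linarith : (0:ℝ) ≤ 3*r)]
  have h2 : (sh*ch+r)^2 ≤ (11/2*r)^2 := by
    apply pow_le_pow_left₀ (by nlinarith [mul_pos (show 0<sh by linarith) (show 0<ch by linarith)]) (by linarith)
  have h3 : (sh*ch+r)^2*q ≤ (11/2*r)^2*2 :=
    mul_le_mul h2 hq2 hq0.le (by positivity)
  have h4a : r*r ≤ r*sh := mul_le_mul_of_nonneg_left hsh1 hr.le
  have h4b : (1:ℝ) ≤ ch^3 := one_le_pow₀ hch1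
  have h4 : r*r*1 ≤ r*sh*ch^3 :=
    mul_le_mul h4a h4b (by norm_num) (mul_nonneg hr.le (by linarith))
  nlinarith [h3, h4]

lemma ineq_large_low {r sh ch q : ℝ} (hr : 0 < r) (hsh0 : 0 < sh) (hch0 : 0 < ch)
    (hq0 : 0 < q) (hch3 : ch ≤ 3*sh) (hq1 : r ≤ q) :
    1/4*(r*sh*ch^3) ≤ (sh*ch+r)^2*q := by
  have a2 : r*ch ≤ q*(3*sh) := mul_le_mul hq1 hch3 hch0.le hq0.le
  have a3 : (r*ch)*(sh*ch^2) ≤ (q*(3*sh))*(sh*ch^2) :=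
    mul_le_mul_of_nonneg_right a2 (by positivity)
  have a1 : sh*ch ≤ sh*ch + r := by linarith
  have b1 : (sh*ch)^2*q ≤ (sh*ch+r)^2*q :=
    mul_le_mul_of_nonneg_right (by nlinarith [mul_pos hsh0 hch0]) hq0.le
  nlinarith [a3, b1]

lemma ineq_large_up {r sh ch q : ℝ} (hr : 0 < r) (hsh0 : 0 < sh) (hch0 : 0 < ch)
    (hq0 : 0 < q) (hsh1 : r ≤ sh) (hshch : sh ≤ ch) (hch1 : 1 ≤ ch) (hq3 : q ≤ 3*r) :
    (sh*ch+r)^2*q ≤ 64*(r*sh*ch^3) := by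
  have u1 : r ≤ sh*ch := by nlinarith
  have u2 : (sh*ch+r)^2 ≤ 4*(sh*ch)^2 := by nlinarith [mul_pos hsh0 hch0]
  have u3 : (sh*ch+r)^2*q ≤ (4*(sh*ch)^2)*(3*r) :=
    mul_le_mul u2 hq3 hq0.le (by positivity)
  have u4 : (12*r*sh*ch^2)*sh ≤ (12*r*sh*ch^2)*ch :=
    mul_le_mul_of_nonneg_left hshch (by positivity)
  nlinarith [u3, u4, mul_pos (mul_pos hr hsh0) (pow_pos hch0 3)]

lemma deriv_m_eq {r : ℝ} (hr : 0 < r) :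
    deriv m r = (Real.sinh r * Real.cosh r + r) /
      (Real.cosh r ^ 2 * (2 * Real.sqrt (r * Real.tanh r))) := by
  have hch : (0:ℝ) < Real.cosh r := Real.cosh_pos r
  have htanh : Real.tanh = fun x => Real.sinh x / Real.cosh x :=
    funext fun x => Real.tanh_eq_sinh_div_cosh x
  have hd1 : HasDerivAt (fun x => Real.sinh x / Real.cosh x)
      ((Real.cosh r * Real.cosh r - Real.sinh r * Real.sinh r) / Real.cosh r ^ 2) r :=
    (Real.hasDerivAt_sinh r).div (Real.hasDerivAt_cosh r) hch.ne'
  rw [← htanh] at hd1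
  have hd2 : HasDerivAt (fun x => x * Real.tanh x)
      (1 * Real.tanh r + r * ((Real.cosh r * Real.cosh r - Real.sinh r * Real.sinh r) /
        Real.cosh r ^ 2)) r := (hasDerivAt_id r).mul hd1
  have ht0 : 0 < Real.tanh r := tanh_pos' hr
  have hne : r * Real.tanh r ≠ 0 := by positivity
  have hd3 := hd2.sqrt hne
  have hev : m =ᶠ[nhds r] fun x => Real.sqrt (x * Real.tanh x) := by
    filter_upwards [eventually_gt_nhds hr] with x hx
    have hx0 : (0:ℝ) ≤ x := hx.le
    rw [m, K, show x * Real.sqrt (Real.tanh x / x)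
        = Real.sqrt (x^2) * Real.sqrt (Real.tanh x / x) by rw [Real.sqrt_sq hx0],
      ← Real.sqrt_mul (sq_nonneg x)]
    congr 1
    field_simp
  rw [hev.deriv_eq, hd3.deriv]
  have hsq : Real.cosh r * Real.cosh r - Real.sinh r * Real.sinh r = 1 := by
    have h := Real.cosh_sq_sub_sinh_sq r
    nlinarith [h]
  rw [hsq]
  have hT : Real.tanh r * Real.cosh r = Real.sinh r := by
    rw [Real.tanh_eq_sinh_div_cosh]; field_simp
  have hnum : 1 * Real.tanh r + r * (1 / Real.cosh r ^ 2)
      = (Real.sinh r * Real.cosh r + r) / Real.cosh r ^ 2 := by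
    field_simp
    linear_combination Real.cosh r * hT
  rw [hnum, div_div]

set_option maxHeartbeats 800000 in
theorem whitham_first_derivative_comparable :
    ∃ c C : ℝ, 0 < c ∧ 0 < C ∧ ∀ r : ℝ, 0 < r →
      c * (1 + r ^ 2) ^ (-(1/4) : ℝ) ≤ deriv m r ∧
      deriv m r ≤ C * (1 + r ^ 2) ^ (-(1/4) : ℝ) := by
  refine ⟨1/4, 4, by norm_num, by norm_num, fun r hr => ?_⟩
  set sh := Real.sinh r with hsh_def
  set ch := Real.cosh r with hch_def
  set t := Real.tanh r with ht_def
  have hsh0 : 0 < sh := Real.sinh_pos_iff.2 hr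
  have hch0 : 0 < ch := Real.cosh_pos r
  have ht0 : 0 < t := tanh_pos' hr
  have hT : t * ch = sh := by
    rw [ht_def, hch_def, hsh_def, Real.tanh_eq_sinh_div_cosh]; field_simp
  set s := Real.sqrt (r * t) with hs_def
  have hs0 : 0 < s := Real.sqrt_pos.2 (by positivity)
  have hs2 : s ^ 2 = r * t := Real.sq_sqrt (by positivity)
  set q := Real.sqrt (1 + r ^ 2) with hq_def
  have hq0 : 0 < q := Real.sqrt_pos.2 (by positivity)
  have hq2 : q ^ 2 = 1 + r ^ 2 := Real.sq_sqrt (by positivity)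
  have hq_ge1 : 1 ≤ q := by nlinarith
  have hq_ger : r ≤ q := by nlinarith
  set y := Real.sqrt q with hy_def
  have hy0 : 0 < y := Real.sqrt_pos.2 hq0
  have hy2 : y ^ 2 = q := Real.sq_sqrt hq0.le
  have hpow : (1 + r ^ 2 : ℝ) ^ (-(1/4) : ℝ) = y⁻¹ := by
    rw [Real.rpow_neg (by positivity)]
    congr 1
    rw [hy_def, hq_def, show ((1:ℝ)/4) = (1/2) * (1/2) by norm_num,
      Real.rpow_mul (by positivity), ← Real.sqrt_eq_rpow, ← Real.sqrt_eq_rpow]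
  have hsh_ge : r ≤ sh := Real.self_le_sinh_iff.2 hr.le
  have hsh_lt_ch : sh < ch := Real.sinh_lt_cosh r
  have hch1 : 1 ≤ ch := Real.one_le_cosh r
  have hmain : 1/4 * (r * sh * ch^3) ≤ (sh * ch + r)^2 * q ∧
      (sh * ch + r)^2 * q ≤ 64 * (r * sh * ch^3) := by
    rcases le_or_gt r (1/2) with hcase | hcase
    · have hea : Real.exp r ≤ 1 + 2*r := exp_le_small hr.le hcase
      have heb : -r + 1 ≤ Real.exp (-r) := Real.add_one_le_exp (-r)
      have hec : Real.exp (-r) ≤ 1 := Real.exp_le_one_iff.2 (by linarith)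
      have hshe : sh = (Real.exp r - Real.exp (-r)) / 2 := Real.sinh_eq r
      have hche : ch = (Real.exp r + Real.exp (-r)) / 2 := Real.cosh_eq r
      have hsh3 : sh ≤ 3 * r := by rw [hshe]; linarith
      have hch32 : ch ≤ 3/2 := by rw [hche]; linarith
      have hq_le2 : q ≤ 2 := by nlinarith
      exact ⟨ineq_small_low hr hsh_ge hsh3 hch1 hch32 hq_ge1,
        ineq_small_up hr hsh_ge hsh3 hch1 hch32 hq0 hq_le2⟩
    · have h2 : Real.exp r * Real.exp r = Real.exp (2*r) := by
        rw [← Real.exp_add]; ring_nf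
      have he2r : (2:ℝ) ≤ Real.exp r * Real.exp r := by
        have h := Real.add_one_le_exp (2*r)
        nlinarith
      have hch3sh : ch ≤ 3 * sh := by
        have hshe : sh = (Real.exp r - Real.exp (-r)) / 2 := Real.sinh_eq r
        have hche : ch = (Real.exp r + Real.exp (-r)) / 2 := Real.cosh_eq r
        have hep : 0 < Real.exp r := Real.exp_pos r
        have hen : 0 < Real.exp (-r) := Real.exp_pos (-r)
        have hprod : Real.exp r * Real.exp (-r) = 1 := by rw [← Real.exp_add]; simp
        rw [hshe, hche]
        nlinarith
      have hq_le3r : q ≤ 3 * r := by nlinarith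
      exact ⟨ineq_large_low hr hsh0 hch0 hq0 hch3sh hq_ger,
        ineq_large_up hr hsh0 hch0 hq0 hsh_ge hsh_lt_ch.le hch1 hq_le3r⟩
  have key1 : 1/4 * (ch ^ 2 * (2 * s)) ≤ (sh * ch + r) * y := by
    apply le_of_pow_le_pow_left₀ two_ne_zero (by positivity)
    have e1 : (1/4 * (ch ^ 2 * (2 * s)))^2 = 1/4 * (ch^4 * s^2) := by ring
    have e2 : ((sh * ch + r) * y)^2 = (sh * ch + r)^2 * y^2 := by ring
    rw [e1, e2, hs2, hy2, show ch^4 * (r * t) = r * (t*ch) * ch^3 by ring, hT]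
    exact hmain.1
  have key2 : (sh * ch + r) * y ≤ 4 * (ch ^ 2 * (2 * s)) := by
    apply le_of_pow_le_pow_left₀ two_ne_zero (by positivity)
    have e1 : (4 * (ch ^ 2 * (2 * s)))^2 = 64 * (ch^4 * s^2) := by ring
    have e2 : ((sh * ch + r) * y)^2 = (sh * ch + r)^2 * y^2 := by ring
    rw [e1, e2, hs2, hy2, show ch^4 * (r * t) = r * (t*ch) * ch^3 by ring, hT]
    exact hmain.2
  rw [deriv_m_eq hr, hpow]
  have hD0 : 0 < ch ^ 2 * (2 * s) := by positivity
  constructor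
  · rw [← div_eq_mul_inv, div_le_div_iff₀ hy0 hD0]
    exact key1
  · rw [← div_eq_mul_inv, div_le_div_iff₀ hD0 hy0]
    exact key2
end

section
/- Let m(r) = r·√(tanh(r)/r). Then m''(r) < 0 for all r > 0, and moreover there exist constants c, C > 0 such that c·r·(1+r²)^(-5/4) ≤ -m''(r) ≤ C·r·(1+r²)^(-5/4) for all r > 0. -/
open Real Filter Topology

namespace Real

theorem hasDerivAt_tanh (x : ℝ) : HasDerivAt tanh (1 - tanh x ^ 2) x := by
  have hc := (cosh_pos x).ne'
  have h := (hasDerivAt_sinh x).div (hasDerivAt_cosh x) hc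
  rw [show tanh = sinh / cosh from funext tanh_eq_sinh_div_cosh]
  refine h.congr_deriv ?_
  rw [Pi.div_apply]
  field_simp

theorem one_sub_tanh_sq (x : ℝ) : 1 - tanh x ^ 2 = (cosh x ^ 2)⁻¹ := by
  have hc := (cosh_pos x).ne'
  rw [tanh_eq_sinh_div_cosh]
  field_simp
  linear_combination cosh_sq x

theorem tanh_pos {x : ℝ} (hx : 0 < x) : 0 < tanh x := by
  rw [tanh_eq_sinh_div_cosh]
  exact div_pos (sinh_pos_iff.2 hx) (cosh_pos x)

theorem sinh_le_mul_cosh {x : ℝ} (hx : 0 ≤ x) : sinh x ≤ x * cosh x := by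
  have hmono : MonotoneOn (fun y => y * cosh y - sinh y) (Set.Ici 0) := by
    refine monotoneOn_of_hasDerivWithinAt_nonneg (f' := fun y => y * sinh y) (convex_Ici 0)
      (by fun_prop) (fun y _ => ?_) (fun y hy => ?_)
    · refine (((hasDerivAt_id y).mul (hasDerivAt_cosh y)).sub (hasDerivAt_sinh y)
        |>.congr_deriv ?_).hasDerivWithinAt
      simp only [id]
      ring
    · rw [interior_Ici] at hy
      exact mul_nonneg hy.out.le (sinh_nonneg_iff.2 hy.out.le)
  simpa using hmono Set.self_mem_Ici hx hx

theorem tanh_le_self {x : ℝ} (hx : 0 ≤ x) : tanh x ≤ x := by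
  rw [tanh_eq_sinh_div_cosh, div_le_iff₀ (cosh_pos x)]
  exact sinh_le_mul_cosh hx

theorem sq_mul_one_sub_tanh_sq_le (x : ℝ) : x ^ 2 * (1 - tanh x ^ 2) ≤ tanh x ^ 2 := by
  have hsq : x ^ 2 ≤ sinh x ^ 2 := by
    rw [sq_le_sq, abs_sinh]
    exact self_le_sinh_iff.2 (abs_nonneg x)
  rw [one_sub_tanh_sq, tanh_eq_sinh_div_cosh, div_pow, ← div_eq_mul_inv]
  gcongr

end Real

theorem deriv_deriv_sqrt {f f' : ℝ → ℝ} {f'' x : ℝ}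
    (hf : ∀ᶠ y in 𝓝 x, HasDerivAt f (f' y) y) (hf' : HasDerivAt f' f'' x) (hx : 0 < f x) :
    deriv (deriv fun y => √(f y)) x = (2 * f x * f'' - f' x ^ 2) / (4 * f x * √(f x)) := by
  have hpos : ∀ᶠ y in 𝓝 x, 0 < f y :=
    hf.self_of_nhds.continuousAt.eventually (lt_mem_nhds hx)
  have hderiv : deriv (fun y => √(f y)) =ᶠ[𝓝 x] fun y => f' y / (2 * √(f y)) := by
    filter_upwards [hf, hpos] with y hfy hy using (hfy.sqrt hy.ne').deriv
  have hquot : HasDerivAt (fun y => f' y / (2 * √(f y))) _ x :=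
    hf'.div ((hf.self_of_nhds.sqrt hx.ne').const_mul 2) (by positivity)
  rw [hderiv.deriv_eq, hquot.deriv]
  field_simp
  rw [sq_sqrt hx.le]
  ring

namespace Whitham

theorem m_eq_sqrt {r : ℝ} (hr : 0 < r) : m r = √(r * tanh r) := by
  rw [m, K, show r * √(tanh r / r) = √(r ^ 2) * √(tanh r / r) by rw [sqrt_sq hr.le],
    ← sqrt_mul (sq_nonneg r)]
  congr 1
  field_simp

theorem hasDerivAt_mul_tanh (x : ℝ) :
    HasDerivAt (fun y => y * tanh y) (tanh x + x * (1 - tanh x ^ 2)) x :=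
  ((hasDerivAt_id x).mul (hasDerivAt_tanh x)).congr_deriv (by simp only [id]; ring)

theorem hasDerivAt_tanh_add_mul_one_sub_tanh_sq (x : ℝ) :
    HasDerivAt (fun y => tanh y + y * (1 - tanh y ^ 2))
      (2 * (1 - tanh x ^ 2) * (1 - x * tanh x)) x :=
  ((hasDerivAt_tanh x).add ((hasDerivAt_id x).mul (((hasDerivAt_tanh x).pow 2).const_sub 1)))
    |>.congr_deriv (by simp only [id, Pi.pow_apply]; ring)

noncomputable def secondDerivNumerator (r : ℝ) : ℝ :=
  tanh r ^ 4 + (1 - tanh r ^ 2) * ((r - tanh r) ^ 2 + 3 * r ^ 2 * tanh r ^ 2)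

theorem deriv_deriv_m {r : ℝ} (hr : 0 < r) :
    deriv (deriv m) r = -secondDerivNumerator r / (4 * (r * tanh r) * √(r * tanh r)) := by
  have hm : m =ᶠ[𝓝 r] fun y => √(y * tanh y) := by
    filter_upwards [lt_mem_nhds hr] with y hy using m_eq_sqrt hy
  rw [hm.deriv.deriv_eq, deriv_deriv_sqrt (.of_forall hasDerivAt_mul_tanh)
    (hasDerivAt_tanh_add_mul_one_sub_tanh_sq r) (mul_pos hr (tanh_pos hr)), secondDerivNumerator]
  congr 1
  ring

theorem tanh_pow_four_le_secondDerivNumerator (r : ℝ) :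
    tanh r ^ 4 ≤ secondDerivNumerator r :=
  le_add_of_nonneg_right <| mul_nonneg (sub_nonneg.2 (tanh_sq_lt_one r).le) (by positivity)

theorem secondDerivNumerator_le {r : ℝ} (hr : 0 < r) :
    secondDerivNumerator r ≤ 5 * tanh r ^ 4 := by
  set t := tanh r
  have ht : 0 ≤ t := (tanh_pos hr).le
  have htr : t ≤ r := tanh_le_self hr.le
  have ht1 : 0 ≤ 1 - t ^ 2 := sub_nonneg.2 (tanh_sq_lt_one r).le
  have hkey : r ^ 2 * (1 - t ^ 2) ≤ t ^ 2 := sq_mul_one_sub_tanh_sq_le r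
  have hdiff : r - t ≤ r * t ^ 2 := by nlinarith
  have hdiff_sq : (r - t) ^ 2 ≤ r ^ 2 * t ^ 4 := by nlinarith
  unfold secondDerivNumerator
  nlinarith [mul_le_mul_of_nonneg_left hdiff_sq ht1, pow_le_one₀ ht (tanh_lt_one r).le (n := 2),
    mul_le_mul_of_nonneg_right hkey (pow_nonneg ht 4),
    mul_le_mul_of_nonneg_right hkey (pow_nonneg ht 2)]

theorem sq_le_tanh_sq_mul_one_add_sq (r : ℝ) : r ^ 2 ≤ tanh r ^ 2 * (1 + r ^ 2) := by
  linarith [sq_mul_one_sub_tanh_sq_le r]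

theorem tanh_sq_mul_one_add_sq_le {r : ℝ} (hr : 0 < r) :
    tanh r ^ 2 * (1 + r ^ 2) ≤ 2 * r ^ 2 := by
  have h1 : tanh r ^ 2 ≤ r ^ 2 := pow_le_pow_left₀ (tanh_pos hr).le (tanh_le_self hr.le) 2
  have h2 : tanh r ^ 2 ≤ 1 := (tanh_sq_lt_one r).le
  nlinarith

theorem rpow_neg_five_fourths_pow_four {a : ℝ} (ha : 0 ≤ a) :
    (a ^ (-(5/4) : ℝ)) ^ 4 = (a ^ 5)⁻¹ := by
  rw [← rpow_natCast, ← rpow_mul ha, ← rpow_natCast, ← rpow_neg ha]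
  norm_num

theorem comparable_of_bounds {r t G : ℝ} (hr : 0 < r) (ht : 0 < t)
    (hG : t ^ 4 ≤ G) (hG' : G ≤ 5 * t ^ 4)
    (hlo : r ^ 2 ≤ t ^ 2 * (1 + r ^ 2)) (hhi : t ^ 2 * (1 + r ^ 2) ≤ 2 * r ^ 2) :
    1/4 * (r * (1 + r ^ 2) ^ (-(5/4) : ℝ)) ≤ G / (4 * (r * t) * √(r * t)) ∧
      G / (4 * (r * t) * √(r * t)) ≤ 3 * (r * (1 + r ^ 2) ^ (-(5/4) : ℝ)) := by
  have hrt : 0 < r * t := mul_pos hr ht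
  have hG0 : 0 < G := (by positivity : 0 < t ^ 4).trans_le hG
  have hx4 : (G / (4 * (r * t) * √(r * t))) ^ 4 = G ^ 4 / (256 * (r * t) ^ 6) := by
    rw [div_pow, show (4 * (r * t) * √(r * t)) ^ 4 = 256 * (r * t) ^ 4 * (√(r * t) ^ 2) ^ 2 by
      ring, sq_sqrt hrt.le]
    ring
  have hy4 : (r * (1 + r ^ 2) ^ (-(5/4) : ℝ)) ^ 4 = r ^ 4 / (1 + r ^ 2) ^ 5 := by
    rw [mul_pow, rpow_neg_five_fourths_pow_four (by positivity), div_eq_mul_inv]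
  constructor
  · rw [← pow_le_pow_iff_left₀ (by positivity) (by positivity) four_ne_zero, mul_pow, hy4, hx4,
      ← mul_div_assoc, div_le_div_iff₀ (by positivity) (by positivity)]
    calc (1 / 4) ^ 4 * r ^ 4 * (256 * (r * t) ^ 6) = t ^ 6 * (r ^ 2) ^ 5 := by ring
      _ ≤ t ^ 6 * (t ^ 2 * (1 + r ^ 2)) ^ 5 := by gcongr
      _ = (t ^ 4) ^ 4 * (1 + r ^ 2) ^ 5 := by ring
      _ ≤ G ^ 4 * (1 + r ^ 2) ^ 5 := by gcongr
  · rw [← pow_le_pow_iff_left₀ (by positivity) (by positivity) four_ne_zero, mul_pow, hy4, hx4,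
      ← mul_div_assoc, div_le_div_iff₀ (by positivity) (by positivity)]
    calc G ^ 4 * (1 + r ^ 2) ^ 5 ≤ (5 * t ^ 4) ^ 4 * (1 + r ^ 2) ^ 5 := by gcongr
      _ = 625 * t ^ 6 * (t ^ 2 * (1 + r ^ 2)) ^ 5 := by ring
      _ ≤ 625 * t ^ 6 * (2 * r ^ 2) ^ 5 := by gcongr
      _ ≤ 3 ^ 4 * r ^ 4 * (256 * (r * t) ^ 6) := by nlinarith [pow_pos hr 10, pow_pos ht 6]

end Whitham

open Whitham in
theorem whitham_second_derivative_comparable :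
    (∀ r : ℝ, 0 < r → deriv (deriv m) r < 0) ∧
    ∃ c C : ℝ, 0 < c ∧ 0 < C ∧ ∀ r : ℝ, 0 < r →
      c * (r * (1 + r ^ 2) ^ (-(5/4) : ℝ)) ≤ -(deriv (deriv m) r) ∧
      -(deriv (deriv m) r) ≤ C * (r * (1 + r ^ 2) ^ (-(5/4) : ℝ)) := by
  have hbounds : ∀ r : ℝ, 0 < r →
      1/4 * (r * (1 + r ^ 2) ^ (-(5/4) : ℝ)) ≤ -(deriv (deriv m) r) ∧
      -(deriv (deriv m) r) ≤ 3 * (r * (1 + r ^ 2) ^ (-(5/4) : ℝ)) := fun r hr => by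
    rw [deriv_deriv_m hr, neg_div, neg_neg]
    exact comparable_of_bounds hr (tanh_pos hr) (tanh_pow_four_le_secondDerivNumerator r)
      (secondDerivNumerator_le hr) (sq_le_tanh_sq_mul_one_add_sq r) (tanh_sq_mul_one_add_sq_le hr)
  refine ⟨fun r hr => ?_, 1/4, 3, by norm_num, by norm_num, hbounds⟩
  have hpos : 0 < 1/4 * (r * (1 + r ^ 2) ^ (-(5/4) : ℝ)) := by positivity
  linarith [(hbounds r hr).1]
end

section
/- Let y : [0,T] → ℝ be continuous with y(t) > 1 for all t, y(0) = y₀, and suppose y(t) ≤ y₀ + C·∫₀ᵗ y(s)·log y(s) ds for all t ∈ [0,T], where C > 0. Then y(t) ≤ exp(e^{Ct}·log y₀) for all t ∈ [0,T]. -/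
/-!
The right-hand side `u t = y₀ + C ∫₀ᵗ y log y` dominates `y` and satisfies
`u' = C y log y ≤ C u log u`, so `log u` has right derivative `u' / u ≤ C log u`.
Grönwall's lemma then gives `log u t ≤ e^{Ct} log u 0 = e^{Ct} log y₀`.
-/

open Set Real

theorem ContinuousOn.integral_hasDerivWithinAt_Icc {g : ℝ → ℝ} {a b t : ℝ}
    (hg : ContinuousOn g (Icc a b)) (ht : t ∈ Icc a b) :
    HasDerivWithinAt (fun u => ∫ x in a..u, g x) (g t) (Icc a b) t :=
  haveI : Fact (t ∈ Icc a b) := ⟨ht⟩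
  intervalIntegral.integral_hasDerivWithinAt_right
    ((hg.mono (Icc_subset_Icc_right ht.2)).intervalIntegrable_of_Icc ht.1)
    (hg.stronglyMeasurableAtFilter_nhdsWithin measurableSet_Icc t) (hg t ht)

theorem log_le_log_mul_exp_of_deriv_right_le_mul_log {f f' : ℝ → ℝ} {K a b : ℝ}
    (hf : ContinuousOn f (Icc a b)) (hpos : ∀ x ∈ Icc a b, 0 < f x)
    (hf' : ∀ x ∈ Ico a b, HasDerivWithinAt f (f' x) (Ici x) x)
    (bound : ∀ x ∈ Ico a b, f' x ≤ K * (f x * log (f x))) :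
    ∀ x ∈ Icc a b, log (f x) ≤ log (f a) * exp (K * (x - a)) := by
  have hlog' : ∀ x ∈ Ico a b, HasDerivWithinAt (log ∘ f) (f' x / f x) (Ici x) x :=
    fun x hx => (hf' x hx).log (hpos x (Ico_subset_Icc_self hx)).ne'
  have hlog_bound : ∀ x ∈ Ico a b, f' x / f x ≤ K * log (f x) + 0 := fun x hx => by
    rw [add_zero, div_le_iff₀ (hpos x (Ico_subset_Icc_self hx))]
    linarith [bound x hx]
  intro x hx
  simpa only [gronwallBound_ε0] using
    le_gronwallBound_of_liminf_deriv_right_le (hf.log fun x hx => (hpos x hx).ne')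
      (fun x hx _ hr => (hlog' x hx).liminf_right_slope_le hr) le_rfl hlog_bound x hx

theorem mul_log_le_mul_log {x y : ℝ} (hx : 1 ≤ x) (hxy : x ≤ y) : x * log x ≤ y * log y :=
  mul_le_mul hxy (log_le_log (by linarith) hxy) (log_nonneg hx) (by linarith)

theorem log_gronwall_general (T C y₀ : ℝ) (hC : 0 < C) (y : ℝ → ℝ)
    (hcont : ContinuousOn y (Set.Icc 0 T))
    (hy1 : ∀ t ∈ Set.Icc (0:ℝ) T, 1 < y t)
    (hineq : ∀ t ∈ Set.Icc (0:ℝ) T,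
      y t ≤ y₀ + C * ∫ s in (0:ℝ)..t, y s * Real.log (y s)) :
    ∀ t ∈ Set.Icc (0:ℝ) T, y t ≤ Real.exp (Real.exp (C * t) * Real.log y₀) := by
  set u : ℝ → ℝ := fun t => y₀ + C * ∫ s in (0:ℝ)..t, y s * log (y s)
  have hu_deriv : ∀ t ∈ Icc 0 T,
      HasDerivWithinAt u (C * (y t * log (y t))) (Icc 0 T) t := by
    have hy_log : ContinuousOn (fun s => y s * log (y s)) (Icc 0 T) :=
      hcont.mul (hcont.log fun s hs => (one_pos.trans (hy1 s hs)).ne')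
    exact fun t ht => ((hy_log.integral_hasDerivWithinAt_Icc ht).const_mul C).const_add y₀
  have hu_pos : ∀ t ∈ Icc 0 T, 0 < u t := fun t ht => by linarith [hy1 t ht, hineq t ht]
  have hlog_u := log_le_log_mul_exp_of_deriv_right_le_mul_log
    (fun t ht => (hu_deriv t ht).continuousWithinAt) hu_pos
    (fun t ht => (hu_deriv t (Ico_subset_Icc_self ht)).mono_of_mem_nhdsWithin
      (Icc_mem_nhdsGE_of_mem ht))
    (fun t ht => mul_le_mul_of_nonneg_left
      (mul_log_le_mul_log (hy1 t (Ico_subset_Icc_self ht)).le (hineq t (Ico_subset_Icc_self ht)))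
      hC.le)
  intro t ht
  have hu0 : u 0 = y₀ := by simp [u]
  calc y t ≤ u t := hineq t ht
    _ = exp (log (u t)) := (exp_log (hu_pos t ht)).symm
    _ ≤ exp (exp (C * t) * log y₀) := by
      rw [exp_le_exp, mul_comm]
      simpa [hu0] using hlog_u t ht

theorem log_gronwall (T C y₀ : ℝ) (hT : 0 ≤ T) (hC : 0 < C) (y : ℝ → ℝ)
    (hcont : ContinuousOn y (Set.Icc 0 T))
    (hy1 : ∀ t ∈ Set.Icc (0:ℝ) T, 1 < y t)
    (hy0 : y 0 = y₀)
    (hineq : ∀ t ∈ Set.Icc (0:ℝ) T,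
      y t ≤ y₀ + C * ∫ s in (0:ℝ)..t, y s * Real.log (y s)) :
    ∀ t ∈ Set.Icc (0:ℝ) T, y t ≤ Real.exp (Real.exp (C * t) * Real.log y₀) :=
  log_gronwall_general T C y₀ hC y hcont hy1 hineq
end
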